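/- arXiv:math/9903208 — 2 statements merged into one kernel-verified Lean document; each statement's English description precedes it below -/
import Mathlib

section
/- Let p ≡ 1 (mod 8) be a prime, and write σ = a + bi ∈ ℤ[i] with a² + b² = p and b even. Then the quadratic residue symbol [σ/σ̄] equals the Legendre symbol (2a/p), and this equals 1. -/
/-!
Since `σ + σ̄ = 2a`, we have `σ ≡ 2a (mod σ̄)`, and `σ̄` divides `σ σ̄ = p`; so an integer square
root of `2a` modulo `p` is a square root of `σ` modulo `σ̄`. As `p ≡ 1 (mod 8)`, `(2/p) = 1`, and
`(a/p) = (p/|a|) = (b²/|a|) = 1` by reciprocity, because `p ≡ b² (mod a)` with `a` odd and prime to `b`.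
-/

open Classical in
/-- The quadratic residue symbol `[α/π]`: `1` if `α` is a square modulo `π`, `-1` otherwise. -/
noncomputable def qr {R : Type*} [CommRing R] (α π : R) : ℤ :=
  if ∃ τ : R, π ∣ α - τ ^ 2 then 1 else -1

theorem Int.exists_sq_dvd_sub_of_isSquare {n : ℕ} {a : ℤ} (h : IsSquare (a : ZMod n)) :
    ∃ c : ℤ, (n : ℤ) ∣ a - c ^ 2 := by
  obtain ⟨r, hr⟩ := h
  obtain ⟨c, rfl⟩ := ZMod.intCast_surjective r
  refine ⟨c, (ZMod.intCast_zmod_eq_zero_iff_dvd _ n).mp ?_⟩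
  push_cast
  rw [hr, sq, sub_self]

theorem Int.isCoprime_of_sq_add_sq_eq_prime {p : ℕ} (hp : p.Prime) {a b : ℤ}
    (h : a ^ 2 + b ^ 2 = p) : IsCoprime a b := by
  rw [Int.isCoprime_iff_gcd_eq_one]
  have hdvd : (Int.gcd a b : ℤ) * Int.gcd a b ∣ p := by
    rw [← h, sq, sq]
    exact dvd_add (mul_dvd_mul (Int.gcd_dvd_left a b) (Int.gcd_dvd_left a b))
      (mul_dvd_mul (Int.gcd_dvd_right a b) (Int.gcd_dvd_right a b))
  exact Nat.isUnit_iff.mp (hp.prime.squarefree _ (by exact_mod_cast hdvd))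

theorem jacobiSym_eq_one_of_sq_add_sq {n : ℕ} {a b : ℤ} (hab : IsCoprime a b) (ha : Odd a)
    (hb : Even b) (h : a ^ 2 + b ^ 2 = n) : jacobiSym a n = 1 := by
  have hn4 : n % 4 = 1 := by
    obtain ⟨k, rfl⟩ := ha
    obtain ⟨m, rfl⟩ := hb
    have : (n : ℤ) % 4 = 1 := by rw [← h]; ring_nf; omega
    omega
  have hn : Odd n := Nat.odd_iff.mpr (by omega)
  have hn_mod : (n : ℤ) % (a.natAbs : ℕ) = b ^ 2 % (a.natAbs : ℕ) := by
    refine Int.modEq_iff_dvd.mpr ?_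
    rw [show b ^ 2 - n = -(a * a) by rw [← h]; ring]
    exact ((Int.natAbs_dvd.mpr dvd_rfl).mul_right a).neg_right
  have habs : jacobiSym a.natAbs n = 1 := by
    rw [jacobiSym.quadratic_reciprocity_one_mod_four' (Int.natAbs_odd.mpr ha) hn4,
      jacobiSym.mod_left' hn_mod]
    exact jacobiSym.sq_one' (Int.isCoprime_iff_gcd_eq_one.mp hab.symm :)
  rcases Int.natAbs_eq a with ha' | ha' <;> rw [ha']
  · exact habs
  · rw [jacobiSym.neg _ hn, ZMod.χ₄_nat_one_mod_four hn4, one_mul, habs]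

theorem qr_star_eq_one_of_norm_dvd {d : ℤ} (z : ℤ√d) {c : ℤ}
    (hc : z.norm ∣ 2 * z.re - c ^ 2) : qr z (star z) = 1 := by
  have hsplit : z - (c : ℤ√d) ^ 2 = -star z + ((2 * z.re - c ^ 2 : ℤ) : ℤ√d) := by
    ext <;> simp <;> ring
  have hnorm : star z ∣ (z.norm : ℤ√d) := ⟨z, by rw [Zsqrtd.norm_eq_mul_conj, mul_comm]⟩
  refine if_pos ⟨c, ?_⟩
  rw [hsplit]
  exact dvd_add (dvd_neg.mpr dvd_rfl) (hnorm.trans (Int.cast_dvd_cast _ _ hc))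

/-- For a prime `p ≡ 1 (mod 8)` written as `p = a² + b²` with `b` even and `σ = a + bi`,
the quadratic residue symbol `[σ/σ̄]` equals the Legendre symbol `(2a/p)`, and both equal `1`. -/
theorem stmt1 (p : ℕ) (hp : p.Prime) (h8 : p % 8 = 1) (a b : ℤ) (hb : Even b)
    (hnorm : a ^ 2 + b ^ 2 = (p : ℤ)) :
    qr (⟨a, b⟩ : Zsqrtd (-1)) (star (⟨a, b⟩ : Zsqrtd (-1))) = jacobiSym (2 * a) p ∧
      qr (⟨a, b⟩ : Zsqrtd (-1)) (star (⟨a, b⟩ : Zsqrtd (-1))) = 1 := by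
  have : Fact p.Prime := ⟨hp⟩
  have hp_odd : Odd p := Nat.odd_iff.mpr (by omega)
  have ha : Odd a := by
    have : Odd (a ^ 2 + b ^ 2) := by rw [hnorm]; exact_mod_cast hp_odd
    simpa [Int.odd_add, parity_simps, hb] using this
  have hJ : jacobiSym (2 * a) p = 1 := by
    rw [jacobiSym.mul_left, jacobiSym.at_two hp_odd, ZMod.χ₈_nat_mod_eight, h8,
      jacobiSym_eq_one_of_sq_add_sq (Int.isCoprime_of_sq_add_sq_eq_prime hp hnorm) ha hb hnorm]
    rfl
  obtain ⟨c, hc⟩ := Int.exists_sq_dvd_sub_of_isSquare (ZMod.isSquare_of_jacobiSym_eq_one hJ)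
  have hN : (⟨a, b⟩ : Zsqrtd (-1)).norm = p := by
    rw [Zsqrtd.norm_def, ← hnorm]
    ring
  have hqr : qr (⟨a, b⟩ : Zsqrtd (-1)) (star ⟨a, b⟩) = 1 :=
    qr_star_eq_one_of_norm_dvd _ (by rwa [hN])
  exact ⟨hqr.trans hJ.symm, hqr⟩
end

section
/- Let p and q be primes with p ≡ q ≡ 1 (mod 8), p = a² + b² and q = c² + d² with b, d even, and let σ = a+bi, τ = c+di ∈ ℤ[i]. Then the quadratic residue symbol [σ/τ] in ℤ[i] is independent of the choices: [σ/τ] = [σ̄/τ] = [σ/τ̄] = [σ̄/τ̄]. -/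
/-!
Complex conjugation is a ring automorphism of `ℤ[i]`, so `[σ̄/τ̄] = [σ/τ]`. Since `N τ = q` is
prime, `τ` is irreducible and `ℤ[i]/(τ)` is a field. In it `σ` and `σ̄` are nonzero, as `q ∤ p`
(`(p/q) ≠ 0`), and their product `σσ̄ = p` is a square, as `(p/q) = 1`. So `σ` and `σ̄` are
squares modulo `τ` together, i.e. `[σ/τ] = [σ̄/τ]`; applying conjugation to this gives
`[σ/τ̄] = [σ̄/τ]` as well.
-/

theorem isSquare_iff_of_isSquare_mul {K : Type*} [CommGroupWithZero K] {a b : K} (ha : a ≠ 0) (hb : b ≠ 0)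
    (hab : IsSquare (a * b)) : IsSquare a ↔ IsSquare b :=
  ⟨fun h => by simpa [ha] using hab.div h,
    fun h => by simpa [hb] using hab.div h⟩

section QuadraticResidueSymbol

variable {R : Type*} [CommRing R]

theorem qr_congr {S : Type*} [CommRing S] {α π : R} {β ϖ : S}
    (h : (∃ y : R, π ∣ α - y ^ 2) ↔ ∃ y : S, ϖ ∣ β - y ^ 2) : qr α π = qr β ϖ := by
  unfold qr; split_ifs <;> tauto

theorem exists_dvd_sub_sq_iff_isSquare (α π : R) :
    (∃ y : R, π ∣ α - y ^ 2) ↔ IsSquare (Ideal.Quotient.mk (Ideal.span {π}) α) := by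
  simp only [IsSquare, ← sq, Ideal.Quotient.mk_surjective.exists, ← map_pow, Ideal.Quotient.eq,
    Ideal.mem_span_singleton]

theorem qr_eq_of_exists_dvd_mul_sub_sq [IsPrincipalIdealRing R] {π α β : R} (hπ : Irreducible π)
    (hα : ¬π ∣ α) (hβ : ¬π ∣ β) (hαβ : ∃ x : R, π ∣ α * β - x ^ 2) : qr α π = qr β π := by
  have := PrincipalIdealRing.isMaximal_of_irreducible hπ
  let := Ideal.Quotient.field (Ideal.span {π})
  rw [exists_dvd_sub_sq_iff_isSquare, map_mul] at hαβ
  refine qr_congr ?_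
  rw [exists_dvd_sub_sq_iff_isSquare, exists_dvd_sub_sq_iff_isSquare]
  exact isSquare_iff_of_isSquare_mul (by rwa [Ne, Ideal.Quotient.eq_zero_iff_dvd])
    (by rwa [Ne, Ideal.Quotient.eq_zero_iff_dvd]) hαβ

theorem qr_map_ringEquiv {S : Type*} [CommRing S] (e : R ≃+* S) (α π : R) :
    qr (e α) (e π) = qr α π :=
  qr_congr <| by simp only [e.surjective.exists, ← map_pow, ← map_sub, map_dvd_iff]

theorem qr_star_star [StarRing R] (α π : R) : qr (star α) (star π) = qr α π := by
  simpa only [starRingAut_apply] using qr_map_ringEquiv starRingAut α π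

end QuadraticResidueSymbol

namespace Zsqrtd

variable {d : ℤ}

theorem irreducible_of_prime_norm {z : ℤ√d} (h : Prime z.norm) : Irreducible z :=
  haveI : IsLocalHom (normMonoidHom (d := d)) := ⟨fun z hz => (isUnit_iff_norm_isUnit z).2 hz⟩
  Irreducible.of_map (f := normMonoidHom (d := d)) h.irreducible

theorem not_dvd_of_isCoprime_norm {z w : ℤ√d} (hz : ¬IsUnit z.norm)
    (h : IsCoprime z.norm w.norm) : ¬z ∣ w := fun hzw =>
  hz (h.isUnit_of_dvd' dvd_rfl (map_dvd (normMonoidHom (d := d)) hzw))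

theorem dvd_intCast_of_norm_dvd {z : ℤ√d} {m : ℤ} (h : z.norm ∣ m) : z ∣ (m : ℤ√d) :=
  (Dvd.intro _ (norm_eq_mul_conj z).symm).trans (Int.cast_dvd_cast _ _ h)

end Zsqrtd

theorem ZMod.exists_intCast_dvd_sub_sq {n : ℕ} {a : ℤ} (h : IsSquare (a : ZMod n)) :
    ∃ x : ℤ, (n : ℤ) ∣ a - x ^ 2 := by
  obtain ⟨r, hr⟩ := h
  obtain ⟨x, rfl⟩ := ZMod.intCast_surjective r
  refine ⟨x, (ZMod.intCast_zmod_eq_zero_iff_dvd _ n).1 ?_⟩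
  push_cast
  rw [hr, sq, sub_self]

theorem stmt18_general (p q : ℕ) (hq : q.Prime) (a b c d : ℤ)
    (hP : a ^ 2 + b ^ 2 = (p : ℤ)) (hQ : c ^ 2 + d ^ 2 = (q : ℤ))
    (hleg : jacobiSym p q = 1) :
    qr (⟨a, b⟩ : Zsqrtd (-1)) (⟨c, d⟩ : Zsqrtd (-1)) =
        qr (star (⟨a, b⟩ : Zsqrtd (-1))) (⟨c, d⟩ : Zsqrtd (-1)) ∧
      qr (⟨a, b⟩ : Zsqrtd (-1)) (⟨c, d⟩ : Zsqrtd (-1)) =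
        qr (⟨a, b⟩ : Zsqrtd (-1)) (star (⟨c, d⟩ : Zsqrtd (-1))) ∧
      qr (⟨a, b⟩ : Zsqrtd (-1)) (⟨c, d⟩ : Zsqrtd (-1)) =
        qr (star (⟨a, b⟩ : Zsqrtd (-1))) (star (⟨c, d⟩ : Zsqrtd (-1))) := by
  set σ : GaussianInt := ⟨a, b⟩
  set τ : GaussianInt := ⟨c, d⟩
  have : Fact q.Prime := ⟨hq⟩
  have hσ : σ.norm = p := by rw [Zsqrtd.norm_def, ← hP]; ring
  have hτ : τ.norm = q := by rw [Zsqrtd.norm_def, ← hQ]; ring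
  have hq' : Prime (q : ℤ) := Nat.prime_iff_prime_int.1 hq
  have hτ_irr : Irreducible τ := Zsqrtd.irreducible_of_prime_norm (hτ ▸ hq')
  have hτ_not_dvd {w : GaussianInt} (hw : w.norm = p) : ¬τ ∣ w := by
    refine Zsqrtd.not_dvd_of_isCoprime_norm (hτ ▸ hq'.not_isUnit) ?_
    rw [hτ, hw, isCoprime_comm, Int.isCoprime_iff_gcd_eq_one]
    by_contra h
    rw [jacobiSym.eq_zero_iff_not_coprime.2 h] at hleg
    exact zero_ne_one hleg
  have hsq : ∃ x, τ ∣ σ * star σ - x ^ 2 := by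
    obtain ⟨x, hx⟩ := ZMod.exists_intCast_dvd_sub_sq (ZMod.isSquare_of_jacobiSym_eq_one hleg)
    refine ⟨x, (Zsqrtd.dvd_intCast_of_norm_dvd (hτ ▸ hx)).trans (dvd_of_eq ?_)⟩
    rw [← Zsqrtd.norm_eq_mul_conj, hσ]
    norm_cast
  have hconj : qr σ τ = qr (star σ) τ := qr_eq_of_exists_dvd_mul_sub_sq hτ_irr
    (hτ_not_dvd hσ) (hτ_not_dvd (by rw [Zsqrtd.norm_conj, hσ])) hsq
  refine ⟨hconj, ?_, (qr_star_star σ τ).symm⟩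
  rw [hconj, ← qr_star_star (star σ) τ, star_star]

/-- For primes `p ≡ q ≡ 1 (mod 8)` with `p = a² + b²`, `q = c² + d²` (`b, d` even),
`(p/q) = 1`, and `σ = a + bi`, `τ = c + di`, the symbol `[σ/τ]` is independent of the choices:
`[σ/τ] = [σ̄/τ] = [σ/τ̄] = [σ̄/τ̄]`. -/
theorem stmt18 (p q : ℕ) (hp : p.Prime) (hq : q.Prime) (hp8 : p % 8 = 1) (hq8 : q % 8 = 1)
    (hpq : p ≠ q) (a b c d : ℤ) (hb : Even b) (hd : Even d)
    (hP : a ^ 2 + b ^ 2 = (p : ℤ)) (hQ : c ^ 2 + d ^ 2 = (q : ℤ))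
    (hleg : jacobiSym p q = 1) :
    qr (⟨a, b⟩ : Zsqrtd (-1)) (⟨c, d⟩ : Zsqrtd (-1)) =
        qr (star (⟨a, b⟩ : Zsqrtd (-1))) (⟨c, d⟩ : Zsqrtd (-1)) ∧
      qr (⟨a, b⟩ : Zsqrtd (-1)) (⟨c, d⟩ : Zsqrtd (-1)) =
        qr (⟨a, b⟩ : Zsqrtd (-1)) (star (⟨c, d⟩ : Zsqrtd (-1))) ∧
      qr (⟨a, b⟩ : Zsqrtd (-1)) (⟨c, d⟩ : Zsqrtd (-1)) =
        qr (star (⟨a, b⟩ : Zsqrtd (-1))) (star (⟨c, d⟩ : Zsqrtd (-1))) :=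
  stmt18_general p q hq a b c d hP hQ hleg
end
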